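/- arXiv:1204.0069 — 2 statements merged into one kernel-verified Lean document; each statement's English description precedes it below -/
import Mathlib

section
/- Suppose D_iᵀAD_i is invertible and rank D_i = p for all 0 ≤ i ≤ k in the cCG iteration. Then the residue matrix R_{k+1} is orthogonal to every earlier direction matrix: D_iᵀR_{k+1} = 0 for all 0 ≤ i ≤ k. -/
open Matrix

/-! Write `S_i = D_iᵀAD_i`. The choices of `α_i` and `β_i` make
`R_{i+1} = R_i - AD_iS_i⁻¹D_iᵀR_i` and `D_{i+1} = R_{i+1} - D_iS_i⁻¹D_iᵀAR_{i+1}`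
oblique projections, so `D_iᵀR_{i+1} = 0` and `D_iᵀAD_{i+1} = 0`. By induction on `l`,
`D_iᵀR_{l+1} = 0` and `D_iᵀAD_{l+1} = 0` for all `i ≤ l`. The one nontrivial case is
`D_iᵀAR_{l+2} = 0` for `i ≤ l`: since `D_iᵀR_i = R_iᵀR_i =: G_i`, we have
`(R_{i+1} - R_i)ᵀ = -G_iS_i⁻¹D_iᵀA`, and every `R_j` is a combination of `D_j` and `D_{j-1}`,
hence orthogonal to `R_{l+2}`. The Gram matrix `G_i` is invertible because `R_i` has trivial
kernel, as `S_0 = D_0ᵀAR_0` and `S_{i+1} = D_{i+1}ᵀAR_{i+1}` are invertible. -/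

namespace Matrix

variable {K m p q : Type*} [Field K] [Fintype m]

theorem IsSymm.transpose_transpose_mul_mul {A : Matrix m m K} (hA : A.IsSymm)
    (D : Matrix m p K) (E : Matrix m q K) : (Dᵀ * A * E)ᵀ = Eᵀ * A * D := by
  simp only [transpose_mul, transpose_transpose, hA.eq, Matrix.mul_assoc]

theorem IsSymm.transpose_mul_mul {A : Matrix m m K} (hA : A.IsSymm) (D : Matrix m p K) :
    (Dᵀ * A * D).IsSymm :=
  hA.transpose_transpose_mul_mul D D

variable [Fintype p] [DecidableEq p]

theorem mul_sub_mul_nonsing_inv_mul_eq_zero {L : Matrix p m K} {M : Matrix m p K}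
    (h : IsUnit (L * M).det) (Y : Matrix m q K) : L * (Y - M * ((L * M)⁻¹ * (L * Y))) = 0 := by
  rw [Matrix.mul_sub, ← Matrix.mul_assoc L M, mul_nonsing_inv_cancel_left _ _ h, sub_self]

theorem mulVec_injective_of_isUnit_det_mul {L : Matrix p m K} {M : Matrix m p K}
    (h : IsUnit (L * M).det) : Function.Injective M.mulVec := by
  have hLM : Function.Injective (L * M).mulVec :=
    mulVec_injective_iff_isUnit.mpr ((isUnit_iff_isUnit_det _).mpr h)
  refine Function.Injective.of_comp (f := L.mulVec) ?_
  simpa only [Function.comp_def, mulVec_mulVec] using hLM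

theorem isUnit_det_transpose_mul_self [LinearOrder K] [IsStrictOrderedRing K] {M : Matrix m p K}
    (h : Function.Injective M.mulVec) : IsUnit (Mᵀ * M).det := by
  rw [← isUnit_iff_isUnit_det, ← mulVec_injective_iff_isUnit, ← coe_mulVecLin,
    ← LinearMap.ker_eq_bot, ker_mulVecLin_transpose_mul_self, LinearMap.ker_eq_bot]
  exact h

end Matrix

/-- The cCG recurrences for the steps `0, …, k`, with `α` and `β` substituted and the
iterates `X` eliminated in favour of the residues. -/
structure IsCCG {K m p : Type*} [Field K] [Fintype m] [Fintype p] [DecidableEq p]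
    (A : Matrix m m K) (R D : ℕ → Matrix m p K) (k : ℕ) : Prop where
  isSymm : A.IsSymm
  direction_zero : D 0 = R 0
  isUnit_det : ∀ i ≤ k, IsUnit ((D i)ᵀ * A * D i).det
  residue_succ : ∀ i ≤ k,
    R (i + 1) = R i - A * D i * (((D i)ᵀ * A * D i)⁻¹ * ((D i)ᵀ * R i))
  direction_succ : ∀ i ≤ k,
    D (i + 1) = R (i + 1) - D i * (((D i)ᵀ * A * D i)⁻¹ * ((D i)ᵀ * A * R (i + 1)))

namespace IsCCG

variable {K m p q : Type*} [Field K] [Fintype m] [Fintype p] [DecidableEq p]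
  {A : Matrix m m K} {R D : ℕ → Matrix m p K} {k i : ℕ}

theorem transpose_mul_residue_succ_eq_zero (h : IsCCG A R D k) (hi : i ≤ k) :
    (D i)ᵀ * R (i + 1) = 0 := by
  have := mul_sub_mul_nonsing_inv_mul_eq_zero (L := (D i)ᵀ) (M := A * D i)
    (by simpa only [Matrix.mul_assoc] using h.isUnit_det i hi) (R i)
  simpa only [h.residue_succ i hi, Matrix.mul_assoc] using this

theorem transpose_mul_mul_direction_succ_eq_zero (h : IsCCG A R D k) (hi : i ≤ k) :
    (D i)ᵀ * A * D (i + 1) = 0 := by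
  rw [h.direction_succ i hi]
  exact mul_sub_mul_nonsing_inv_mul_eq_zero (h.isUnit_det i hi) _

theorem transpose_mul_mul_self_direction_succ (h : IsCCG A R D k) (hi : i ≤ k) :
    (D (i + 1))ᵀ * A * D (i + 1) = (D (i + 1))ᵀ * A * R (i + 1) := by
  have hconj : (D (i + 1))ᵀ * A * D i = 0 := by
    rw [← h.isSymm.transpose_transpose_mul_mul, h.transpose_mul_mul_direction_succ_eq_zero hi,
      transpose_zero]
  nth_rw 2 [h.direction_succ i hi]
  rw [Matrix.mul_sub, ← Matrix.mul_assoc, hconj, Matrix.zero_mul, sub_zero]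

theorem residue_mulVec_injective (h : IsCCG A R D k) (hi : i ≤ k) :
    Function.Injective (R i).mulVec := by
  cases i with
  | zero =>
    rw [← h.direction_zero]
    exact mulVec_injective_of_isUnit_det_mul (h.isUnit_det 0 hi)
  | succ j =>
    refine mulVec_injective_of_isUnit_det_mul (L := (D (j + 1))ᵀ * A) ?_
    rw [← h.transpose_mul_mul_self_direction_succ (Nat.le_of_succ_le hi)]
    exact h.isUnit_det _ hi

theorem transpose_mul_residue_self (h : IsCCG A R D k) (hi : i ≤ k) :
    (D i)ᵀ * R i = (R i)ᵀ * R i := by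
  cases i with
  | zero => rw [h.direction_zero]
  | succ j =>
    rw [h.direction_succ j (Nat.le_of_succ_le hi), transpose_sub, Matrix.sub_mul, transpose_mul,
      Matrix.mul_assoc, h.transpose_mul_residue_succ_eq_zero (Nat.le_of_succ_le hi),
      Matrix.mul_zero, sub_zero]

theorem transpose_residue_mul_eq_zero_of_directions (h : IsCCG A R D k) {N : ℕ} (hN : N ≤ k + 1)
    {Y : Matrix m q K} (hY : ∀ j ≤ N, (D j)ᵀ * Y = 0) : ∀ j ≤ N, (R j)ᵀ * Y = 0 := by
  intro j hj
  cases j with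
  | zero => rw [← h.direction_zero]; exact hY 0 hj
  | succ j =>
    rw [eq_add_of_sub_eq (h.direction_succ j (by omega)).symm, transpose_add, Matrix.add_mul,
      hY (j + 1) hj, transpose_mul, Matrix.mul_assoc, hY j (by omega), Matrix.mul_zero, add_zero]

theorem transpose_mul_mul_eq_zero_of_residues [LinearOrder K] [IsStrictOrderedRing K]
    (h : IsCCG A R D k) (hi : i ≤ k) {Y : Matrix m q K} (h₀ : (R i)ᵀ * Y = 0)
    (h₁ : (R (i + 1))ᵀ * Y = 0) : (D i)ᵀ * A * Y = 0 := by
  set U := (R i)ᵀ * R i * ((D i)ᵀ * A * D i)⁻¹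
  have hU : IsUnit U.det := by
    rw [det_mul]
    exact (isUnit_det_transpose_mul_self (h.residue_mulVec_injective hi)).mul
      (isUnit_nonsing_inv_det _ (h.isUnit_det i hi))
  have hdiff : (R (i + 1) - R i)ᵀ * Y = -(U * ((D i)ᵀ * A * Y)) := by
    rw [h.residue_succ i hi, h.transpose_mul_residue_self hi]
    simp only [sub_sub_cancel_left, transpose_neg, transpose_mul, transpose_transpose,
      (h.isSymm.transpose_mul_mul _).inv.eq, h.isSymm.eq]
    simp only [U, Matrix.mul_assoc, Matrix.neg_mul]
  rw [transpose_sub, Matrix.sub_mul, h₀, h₁, sub_zero, eq_comm, neg_eq_zero] at hdiff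
  rw [← nonsing_inv_mul_cancel_left _ ((D i)ᵀ * A * Y) hU, hdiff, Matrix.mul_zero]

theorem transpose_mul_residue_eq_zero_and_transpose_mul_mul_direction_eq_zero
    [LinearOrder K] [IsStrictOrderedRing K] (h : IsCCG A R D k) {l : ℕ} (hl : l ≤ k) :
    ∀ i ≤ l, (D i)ᵀ * R (l + 1) = 0 ∧ (D i)ᵀ * A * D (l + 1) = 0 := by
  induction l with
  | zero =>
    intro i hi
    obtain rfl := Nat.le_zero.mp hi
    exact ⟨h.transpose_mul_residue_succ_eq_zero hl, h.transpose_mul_mul_direction_succ_eq_zero hl⟩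
  | succ l ih =>
    replace ih := ih (by omega)
    have horth : ∀ i ≤ l + 1, (D i)ᵀ * R (l + 2) = 0 := by
      intro i hi
      rcases Nat.lt_or_eq_of_le hi with hi | rfl
      · obtain ⟨hres, hdir⟩ := ih i (by omega)
        rw [h.residue_succ (l + 1) hl, Matrix.mul_sub, hres, ← Matrix.mul_assoc,
          ← Matrix.mul_assoc (D i)ᵀ A, hdir, Matrix.zero_mul, sub_zero]
      · exact h.transpose_mul_residue_succ_eq_zero hl
    refine fun i hi => ⟨horth i hi, ?_⟩
    rcases Nat.lt_or_eq_of_le hi with hi | rfl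
    · have hres := h.transpose_residue_mul_eq_zero_of_directions (by omega) horth
      rw [h.direction_succ (l + 1) hl, Matrix.mul_sub,
        h.transpose_mul_mul_eq_zero_of_residues (by omega) (hres i (by omega))
          (hres (i + 1) (by omega)),
        ← Matrix.mul_assoc, (ih i (by omega)).2, Matrix.zero_mul, sub_zero]
    · exact h.transpose_mul_mul_direction_succ_eq_zero hl

end IsCCG

theorem cCG_residue_orthogonal_to_directions_general
    (n p : ℕ)
    (A : Matrix (Fin n) (Fin n) ℝ) (hA : A.PosDef)
    (b : Fin n → ℝ) (k : ℕ)
    (X R D : ℕ → Matrix (Fin n) (Fin p) ℝ)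
    (α β : ℕ → Matrix (Fin p) (Fin p) ℝ)
    (hR : ∀ i, R i = A * X i - Matrix.vecMulVec b 1)
    (hD0 : D 0 = R 0)
    (hinv : ∀ i ≤ k, IsUnit ((D i)ᵀ * A * D i).det)
    (hα : ∀ i ≤ k, α i = -((R i)ᵀ * D i * ((D i)ᵀ * A * D i)⁻¹))
    (hX : ∀ i ≤ k, X (i + 1) = X i + D i * (α i)ᵀ)
    (hβ : ∀ i ≤ k, β i = -((R (i + 1))ᵀ * A * D i * ((D i)ᵀ * A * D i)⁻¹))
    (hDs : ∀ i ≤ k, D (i + 1) = R (i + 1) + D i * (β i)ᵀ)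
    :
    ∀ i ≤ k, (D i)ᵀ * R (k + 1) = 0 := by
  have hA' : A.IsSymm := isHermitian_iff_isSymm.mp hA.isHermitian
  have hS : ∀ i, (((D i)ᵀ * A * D i)⁻¹)ᵀ = ((D i)ᵀ * A * D i)⁻¹ := fun i =>
    (hA'.transpose_mul_mul _).inv.eq
  have hcg : IsCCG A R D k :=
    { isSymm := hA'
      direction_zero := hD0
      isUnit_det := hinv
      residue_succ := fun i hi => by
        rw [hR (i + 1), hX i hi, Matrix.mul_add, add_sub_right_comm, ← hR i, hα i hi]
        simp only [transpose_neg, transpose_mul, transpose_transpose, hS]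
        simp only [Matrix.mul_neg, Matrix.mul_assoc, sub_eq_add_neg]
      direction_succ := fun i hi => by
        rw [hDs i hi, hβ i hi]
        simp only [transpose_neg, transpose_mul, transpose_transpose, hS, hA'.eq]
        simp only [Matrix.mul_neg, Matrix.mul_assoc, sub_eq_add_neg] }
  exact fun i hi =>
    (hcg.transpose_mul_residue_eq_zero_and_transpose_mul_mul_direction_eq_zero le_rfl i hi).1

/-- If `D_iᵀAD_i` is invertible and `rank D_i = p` for all `0 ≤ i ≤ k`
in the cCG iteration, then the residue matrix `R_{k+1}` is orthogonal to every earlier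
direction matrix: `D_iᵀR_{k+1} = 0` for all `0 ≤ i ≤ k`. -/
theorem cCG_residue_orthogonal_to_directions
    (n p : ℕ) (hn : 0 < n) (hp : 0 < p) (hpn : p ≤ n)
    (A : Matrix (Fin n) (Fin n) ℝ) (hA : A.PosDef)
    (b : Fin n → ℝ) (k : ℕ)
    (X R D : ℕ → Matrix (Fin n) (Fin p) ℝ)
    (α β : ℕ → Matrix (Fin p) (Fin p) ℝ)
    (hR : ∀ i, R i = A * X i - Matrix.vecMulVec b 1)
    (hD0 : D 0 = R 0)
    (hinv : ∀ i ≤ k, IsUnit ((D i)ᵀ * A * D i).det)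
    (hrank : ∀ i ≤ k, (D i).rank = p)
    (hα : ∀ i ≤ k, α i = -((R i)ᵀ * D i * ((D i)ᵀ * A * D i)⁻¹))
    (hX : ∀ i ≤ k, X (i + 1) = X i + D i * (α i)ᵀ)
    (hβ : ∀ i ≤ k, β i = -((R (i + 1))ᵀ * A * D i * ((D i)ᵀ * A * D i)⁻¹))
    (hDs : ∀ i ≤ k, D (i + 1) = R (i + 1) + D i * (β i)ᵀ)
    :
    ∀ i ≤ k, (D i)ᵀ * R (k + 1) = 0 :=
  cCG_residue_orthogonal_to_directions_general n p A hA b k X R D α β hR hD0 hinv hα hX hβ hDs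
end

section
/- Suppose the cCG iteration with initial condition X₀ is well defined and rank D_k = p (with D_kᵀAD_k invertible) for all 0 ≤ k < k* = ⌊n/p⌋. Then the subspace span[D_i]₀^{k*−1} has dimension p⌊n/p⌋, and for every canonical basis vector e_j of ℝᵖ, the column X_{k*}e_j minimizes f over the affine subspace X₀e_j + span[D_i]₀^{k*−1}, an affine subspace of ℝⁿ of dimension p⌊n/p⌋ (hence of codimension n − p⌊n/p⌋ ≤ p − 1). -/
/-!
The block form of the conjugate gradient argument. By induction on `k`, the residual `R k` is
orthogonal to the earlier directions, `(R k)ᵀ D i = 0`, and `D k` is `A`-conjugate to them,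
`(D k)ᵀ A D i = 0`. In the induction step, `(R (k+1))ᵀ A D i = 0` is obtained from
`(R (k+1))ᵀ A D i (α i)ᵀ = (R (k+1))ᵀ (R (i+1) - R i) = 0`, so `α i` must be invertible: as
`(R i)ᵀ D i = (R i)ᵀ R i` and `D i` is a matrix times `R i`, invertibility of the Gram matrix
`(D i)ᵀ A D i` forces `R i` to have full column rank.

Conjugacy and invertible Gram matrices make the `p ⌊n/p⌋` columns of the directions linearly
independent. Column `j` of `X k*` lies in `X 0 e_j + span[D_i]`, and orthogonality to that span of
column `j` of `R k*`, the gradient of `f` there, is the first-order condition for the convex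
quadratic `f`.
-/

open Matrix

/-- The span in `ℝⁿ` of all the columns of the matrices `M 0, …, M (k-1)`. -/
def colSpanLt (n p : ℕ) (k : ℕ) (M : ℕ → Matrix (Fin n) (Fin p) ℝ) :
    Submodule ℝ (Fin n → ℝ) :=
  Submodule.span ℝ {v : Fin n → ℝ | ∃ i < k, ∃ j : Fin p, v = fun r => M i r j}

variable {m ι : Type*} [Fintype m] [Fintype ι] [DecidableEq ι]

section Conjugacy

variable {R : Type*} [CommRing R] {κ : Type*} [Fintype κ]

theorem linearIndependent_cols_of_conjugate {A : Matrix m m R} {M : κ → Matrix m ι R}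
    (hG : ∀ i, IsUnit ((M i)ᵀ * A * M i).det)
    (hconj : ∀ i l, i ≠ l → (M l)ᵀ * A * M i = 0) :
    LinearIndependent R fun q : κ × ι => (M q.1).col q.2 := by
  rw [Fintype.linearIndependent_iff]
  intro g hg
  have hsum : ∑ i, M i *ᵥ (fun j => g (i, j)) = 0 := by
    simpa only [mulVec_eq_sum, op_smul_eq_smul, Fintype.sum_prod_type, col_def] using hg
  have hblock : ∀ l, (fun j => g (l, j)) = 0 := by
    intro l
    have happ := congrArg (((M l)ᵀ * A) *ᵥ ·) hsum
    simp only [mulVec_sum, mulVec_mulVec, mulVec_zero] at happ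
    rw [Finset.sum_eq_single l (fun i _ hil => by rw [hconj i l hil, zero_mulVec])
      (by simp)] at happ
    simpa [mulVec_mulVec, nonsing_inv_mul _ (hG l)] using
      congrArg (((M l)ᵀ * A * M l)⁻¹ *ᵥ ·) happ
  exact fun q => congrFun (hblock q.1) q.2

end Conjugacy

theorem Matrix.isUnit_det_of_card_le_rank {𝕜 : Type*} [Field 𝕜] (M : Matrix ι ι 𝕜)
    (h : Fintype.card ι ≤ M.rank) : IsUnit M.det := by
  have hrange : LinearMap.range M.mulVecLin = ⊤ :=
    Submodule.eq_top_of_finrank_eq (le_antisymm (Submodule.finrank_le _)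
      (by simpa [rank] using h))
  exact (isUnit_iff_isUnit_det M).mp
    (mulVec_surjective_iff_isUnit.mp (LinearMap.range_eq_top.mp hrange))

theorem quadratic_le_add_of_dotProduct_residual_eq_zero {A : Matrix m m ℝ} (hA : A.PosSemidef)
    {b x w : m → ℝ} (hw : w ⬝ᵥ (A *ᵥ x - b) = 0) :
    1 / 2 * (x ⬝ᵥ A *ᵥ x) - b ⬝ᵥ x ≤ 1 / 2 * ((x + w) ⬝ᵥ A *ᵥ (x + w)) - b ⬝ᵥ (x + w) := by
  have hsymm : x ⬝ᵥ A *ᵥ w = w ⬝ᵥ A *ᵥ x := by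
    rw [dotProduct_mulVec, ← mulVec_transpose, (isHermitian_iff_isSymm.mp hA.isHermitian).eq,
      dotProduct_comm]
  have hnonneg : 0 ≤ w ⬝ᵥ A *ᵥ w := by simpa using hA.dotProduct_mulVec_nonneg w
  simp only [mulVec_add, dotProduct_add, add_dotProduct, dotProduct_sub] at hw ⊢
  rw [hsymm, dotProduct_comm b w]
  linarith

structure IsCCGIteration (A : Matrix m m ℝ) (b : m → ℝ) (K : ℕ)
    (X R D : ℕ → Matrix m ι ℝ) (α β : ℕ → Matrix ι ι ℝ) : Prop where
  residual_eq : ∀ i, R i = A * X i - vecMulVec b 1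
  direction_zero : D 0 = R 0
  isUnit_det_gram : ∀ i < K, IsUnit ((D i)ᵀ * A * D i).det
  alpha_eq : ∀ i < K, α i = -((R i)ᵀ * D i * ((D i)ᵀ * A * D i)⁻¹)
  iterate_succ : ∀ i < K, X (i + 1) = X i + D i * (α i)ᵀ
  beta_eq : ∀ i < K, β i = -((R (i + 1))ᵀ * A * D i * ((D i)ᵀ * A * D i)⁻¹)
  direction_succ : ∀ i < K, D (i + 1) = R (i + 1) + D i * (β i)ᵀ

namespace IsCCGIteration

variable {A : Matrix m m ℝ} {b : m → ℝ} {K i : ℕ} {X R D : ℕ → Matrix m ι ℝ}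
  {α β : ℕ → Matrix ι ι ℝ} {o : Type*}

theorem residual_succ (h : IsCCGIteration A b K X R D α β) (hi : i < K) :
    R (i + 1) = R i + A * D i * (α i)ᵀ := by
  rw [h.residual_eq, h.residual_eq, h.iterate_succ i hi, Matrix.mul_add, Matrix.mul_assoc]
  abel

theorem alpha_mul_gram (h : IsCCGIteration A b K X R D α β) (hi : i < K) :
    α i * ((D i)ᵀ * A * D i) = -((R i)ᵀ * D i) := by
  rw [h.alpha_eq i hi, Matrix.neg_mul, Matrix.mul_assoc,
    nonsing_inv_mul _ (h.isUnit_det_gram i hi), Matrix.mul_one]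

theorem beta_mul_gram (h : IsCCGIteration A b K X R D α β) (hi : i < K) :
    β i * ((D i)ᵀ * A * D i) = -((R (i + 1))ᵀ * A * D i) := by
  rw [h.beta_eq i hi, Matrix.neg_mul, Matrix.mul_assoc,
    nonsing_inv_mul _ (h.isUnit_det_gram i hi), Matrix.mul_one]

theorem transpose_residual_succ_mul (h : IsCCGIteration A b K X R D α β) (hA : A.IsSymm)
    (hi : i < K) (N : Matrix m o ℝ) :
    (R (i + 1))ᵀ * N = (R i)ᵀ * N + α i * ((D i)ᵀ * A * N) := by
  rw [h.residual_succ hi, transpose_add, Matrix.add_mul, transpose_mul, transpose_mul, hA.eq]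
  simp only [transpose_transpose, Matrix.mul_assoc]

theorem transpose_direction_succ_mul (h : IsCCGIteration A b K X R D α β) (hi : i < K)
    (N : Matrix m o ℝ) :
    (D (i + 1))ᵀ * A * N = (R (i + 1))ᵀ * A * N + β i * ((D i)ᵀ * A * N) := by
  rw [h.direction_succ i hi, transpose_add, Matrix.add_mul, Matrix.add_mul, transpose_mul,
    transpose_transpose]
  simp only [Matrix.mul_assoc]

theorem transpose_residual_succ_mul_direction (h : IsCCGIteration A b K X R D α β)
    (hA : A.IsSymm) (hi : i < K) : (R (i + 1))ᵀ * D i = 0 := by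
  rw [h.transpose_residual_succ_mul hA hi, h.alpha_mul_gram hi, add_neg_cancel]

theorem transpose_direction_succ_mul_direction (h : IsCCGIteration A b K X R D α β)
    (hi : i < K) : (D (i + 1))ᵀ * A * D i = 0 := by
  rw [h.transpose_direction_succ_mul hi, h.beta_mul_gram hi, add_neg_cancel]

theorem transpose_residual_mul_direction (h : IsCCGIteration A b K X R D α β) (hA : A.IsSymm)
    (hi : i ≤ K) : (R i)ᵀ * D i = (R i)ᵀ * R i := by
  cases i with
  | zero => rw [h.direction_zero]
  | succ i =>
    rw [h.direction_succ i hi, Matrix.mul_add, ← Matrix.mul_assoc,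
      h.transpose_residual_succ_mul_direction hA hi, Matrix.zero_mul, add_zero]

theorem mul_residual_eq_zero (h : IsCCGIteration A b K X R D α β) {j : ℕ} (hj : j ≤ K)
    {N : Matrix o m ℝ} (hN : ∀ i ≤ j, N * D i = 0) : N * R j = 0 := by
  cases j with
  | zero => rw [← h.direction_zero, hN 0 le_rfl]
  | succ j =>
    rw [show R (j + 1) = D (j + 1) - D j * (β j)ᵀ by rw [h.direction_succ j hj]; abel,
      Matrix.mul_sub, hN _ le_rfl, ← Matrix.mul_assoc, hN j (by omega), Matrix.zero_mul, sub_zero]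

theorem direction_succ_eq_mul_residual [DecidableEq m] (h : IsCCGIteration A b K X R D α β)
    (hA : A.IsSymm) (hi : i < K) :
    D (i + 1) = (1 - D i * ((D i)ᵀ * A * D i)⁻¹ᵀ * ((D i)ᵀ * A)) * R (i + 1) := by
  rw [h.direction_succ i hi, h.beta_eq i hi, Matrix.sub_mul, Matrix.one_mul, sub_eq_add_neg]
  simp only [transpose_neg, transpose_mul, transpose_transpose, hA.eq, Matrix.mul_neg,
    Matrix.mul_assoc]

theorem card_le_rank_residual (h : IsCCGIteration A b K X R D α β) (hA : A.IsSymm)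
    (hi : i < K) : Fintype.card ι ≤ (R i).rank := by
  have hD : Fintype.card ι ≤ (D i).rank := calc
    Fintype.card ι = ((D i)ᵀ * A * D i).rank :=
      (rank_of_isUnit _ ((isUnit_iff_isUnit_det _).mpr (h.isUnit_det_gram i hi))).symm
    _ ≤ (D i).rank := rank_mul_le_right _ _
  classical
  cases i with
  | zero => rwa [← h.direction_zero]
  | succ i =>
    rw [h.direction_succ_eq_mul_residual hA (by omega)] at hD
    exact hD.trans (rank_mul_le_right _ _)

theorem isUnit_det_alpha (h : IsCCGIteration A b K X R D α β) (hA : A.IsSymm) (hi : i < K) :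
    IsUnit (α i).det := by
  have hRR : IsUnit ((R i)ᵀ * R i).det := isUnit_det_of_card_le_rank _ <| by
    rw [rank_transpose_mul_self]; exact h.card_le_rank_residual hA hi
  rw [h.alpha_eq i hi, h.transpose_residual_mul_direction hA hi.le, det_neg, det_mul]
  exact (isUnit_neg_one.pow _).mul (hRR.mul (isUnit_nonsing_inv_det _ (h.isUnit_det_gram i hi)))

theorem mul_mul_direction_eq_zero (h : IsCCGIteration A b K X R D α β) (hA : A.IsSymm)
    (hi : i < K) {N : Matrix o m ℝ} (h0 : N * R i = 0) (h1 : N * R (i + 1) = 0) :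
    N * A * D i = 0 := by
  have hαT : IsUnit (α i)ᵀ.det := by rw [det_transpose]; exact h.isUnit_det_alpha hA hi
  have hstep : A * D i * (α i)ᵀ = R (i + 1) - R i := by rw [h.residual_succ hi]; abel
  have hprod : N * A * D i * (α i)ᵀ = 0 := by
    simp only [Matrix.mul_assoc] at hstep ⊢
    rw [hstep, Matrix.mul_sub, h0, h1, sub_zero]
  rw [← mul_nonsing_inv_cancel_right _ (N * A * D i) hαT, hprod, Matrix.zero_mul]

theorem orthogonal_and_conjugate (h : IsCCGIteration A b K X R D α β) (hA : A.IsSymm) :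
    ∀ k ≤ K, ∀ i < k, (R k)ᵀ * D i = 0 ∧ (D k)ᵀ * A * D i = 0 := by
  intro k
  induction k with
  | zero => intro _ i hi; omega
  | succ k ih =>
    intro hk i hi
    have hk : k < K := hk
    have horth : ∀ i < k + 1, (R (k + 1))ᵀ * D i = 0 := by
      intro i hi
      rcases Nat.lt_succ_iff_lt_or_eq.mp hi with hik | rfl
      · rw [h.transpose_residual_succ_mul hA hk, (ih hk.le i hik).1, (ih hk.le i hik).2,
          Matrix.mul_zero, add_zero]
      · exact h.transpose_residual_succ_mul_direction hA hk
    have hres : ∀ j ≤ k, (R (k + 1))ᵀ * R j = 0 := fun j hj =>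
      h.mul_residual_eq_zero (by omega) fun i hi => horth i (by omega)
    refine ⟨horth i hi, ?_⟩
    rcases Nat.lt_succ_iff_lt_or_eq.mp hi with hik | rfl
    · rw [h.transpose_direction_succ_mul hk, (ih hk.le i hik).2,
        h.mul_mul_direction_eq_zero hA (by omega) (hres i (by omega)) (hres (i + 1) hik),
        Matrix.mul_zero, add_zero]
    · exact h.transpose_direction_succ_mul_direction hk

theorem transpose_direction_mul_direction (h : IsCCGIteration A b K X R D α β) (hA : A.IsSymm)
    {l : ℕ} (hi : i < K) (hl : l < K) (hil : i ≠ l) : (D l)ᵀ * A * D i = 0 := by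
  rcases Nat.lt_or_gt_of_ne hil with hil | hli
  · exact (h.orthogonal_and_conjugate hA l hl.le i hil).2
  · have hconj := congrArg transpose (h.orthogonal_and_conjugate hA i hi.le l hli).2
    rwa [transpose_mul, transpose_mul, transpose_transpose, hA.eq, transpose_zero,
      ← Matrix.mul_assoc] at hconj

theorem col_residual (h : IsCCGIteration A b K X R D α β) (k : ℕ) (j : ι) :
    (R k).col j = A *ᵥ (X k).col j - b := by
  ext r
  simp [h.residual_eq, mul_apply, mulVec, dotProduct]

theorem col_iterate_succ (h : IsCCGIteration A b K X R D α β) (hi : i < K) (j : ι) :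
    (X (i + 1)).col j = (X i).col j + D i *ᵥ α i j := by
  rw [h.iterate_succ i hi]
  rfl

end IsCCGIteration

section ColSpan

variable {n p k : ℕ} {M : ℕ → Matrix (Fin n) (Fin p) ℝ}

theorem mulVec_mem_colSpanLt {i : ℕ} (hi : i < k) (c : Fin p → ℝ) :
    M i *ᵥ c ∈ colSpanLt n p k M := by
  have hc : M i *ᵥ c ∈ LinearMap.range (M i).mulVecLin := ⟨c, rfl⟩
  rw [range_mulVecLin] at hc
  exact Submodule.span_mono (by rintro _ ⟨j, rfl⟩; exact ⟨i, hi, j, rfl⟩) hc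

theorem dotProduct_eq_zero_of_mem_colSpanLt {y v : Fin n → ℝ}
    (hM : ∀ i < k, (M i)ᵀ *ᵥ y = 0) (hv : v ∈ colSpanLt n p k M) : v ⬝ᵥ y = 0 := by
  induction hv using Submodule.span_induction with
  | mem x hx => obtain ⟨i, hi, j, rfl⟩ := hx; exact congrFun (hM i hi) j
  | zero => exact zero_dotProduct y
  | add x z _ _ hx hz => rw [add_dotProduct, hx, hz, add_zero]
  | smul a x _ hx => rw [smul_dotProduct, hx, smul_zero]

theorem colSpanLt_eq_span_range :
    colSpanLt n p k M =
      Submodule.span ℝ (Set.range fun q : Fin k × Fin p => (M q.1).col q.2) := by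
  unfold colSpanLt
  congr 1
  ext v
  constructor
  · rintro ⟨i, hi, j, rfl⟩; exact ⟨(⟨i, hi⟩, j), rfl⟩
  · rintro ⟨⟨i, j⟩, rfl⟩; exact ⟨i, i.isLt, j, rfl⟩

theorem finrank_colSpanLt {A : Matrix (Fin n) (Fin n) ℝ}
    (hG : ∀ i < k, IsUnit ((M i)ᵀ * A * M i).det)
    (hconj : ∀ i < k, ∀ l < k, i ≠ l → (M l)ᵀ * A * M i = 0) :
    Module.finrank ℝ (colSpanLt n p k M) = p * k := by
  have hli : LinearIndependent ℝ fun q : Fin k × Fin p => (M q.1).col q.2 :=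
    linearIndependent_cols_of_conjugate (A := A) (M := fun i : Fin k => M i)
      (fun i => hG i i.isLt) fun i l hil => hconj i i.isLt l l.isLt (Fin.val_ne_of_ne hil)
  rw [colSpanLt_eq_span_range, finrank_span_eq_card hli, Fintype.card_prod, Fintype.card_fin,
    Fintype.card_fin, mul_comm]

end ColSpan

namespace IsCCGIteration

variable {n p K : ℕ} {A : Matrix (Fin n) (Fin n) ℝ} {b : Fin n → ℝ}
  {X R D : ℕ → Matrix (Fin n) (Fin p) ℝ} {α β : ℕ → Matrix (Fin p) (Fin p) ℝ}

theorem col_iterate_sub_mem_colSpanLt (h : IsCCGIteration A b K X R D α β) (j : Fin p) :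
    ∀ k ≤ K, (X k).col j - (X 0).col j ∈ colSpanLt n p K D := by
  intro k
  induction k with
  | zero => intro _; rw [sub_self]; exact zero_mem _
  | succ k ih =>
    intro hk
    rw [h.col_iterate_succ hk, add_sub_right_comm]
    exact add_mem (ih (by omega)) (mulVec_mem_colSpanLt hk _)

theorem quadratic_col_iterate_le (h : IsCCGIteration A b K X R D α β) (hA : A.PosDef) (j : Fin p)
    {v : Fin n → ℝ} (hv : v ∈ colSpanLt n p K D) :
    1 / 2 * ((X K).col j ⬝ᵥ A *ᵥ (X K).col j) - b ⬝ᵥ (X K).col j ≤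
      1 / 2 * (((X 0).col j + v) ⬝ᵥ A *ᵥ ((X 0).col j + v)) - b ⬝ᵥ ((X 0).col j + v) := by
  have hw : (X 0).col j + v - (X K).col j ∈ colSpanLt n p K D := by
    rw [add_sub_right_comm, ← neg_sub]
    exact add_mem (neg_mem (h.col_iterate_sub_mem_colSpanLt j K le_rfl)) hv
  have horth : ∀ i < K, (D i)ᵀ *ᵥ (R K).col j = 0 := fun i hi => by
    have hRD := congrArg transpose
      (h.orthogonal_and_conjugate (isHermitian_iff_isSymm.mp hA.isHermitian) K le_rfl i hi).1
    rw [transpose_mul, transpose_transpose, transpose_zero] at hRD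
    exact congrArg (fun N => N.col j) hRD
  have key := quadratic_le_add_of_dotProduct_residual_eq_zero hA.posSemidef
    (h.col_residual K j ▸ dotProduct_eq_zero_of_mem_colSpanLt horth hw)
  rwa [add_sub_cancel] at key

end IsCCGIteration

theorem cCG_final_minimization_general
    (n p : ℕ) (hp : 0 < p)
    (A : Matrix (Fin n) (Fin n) ℝ) (hA : A.PosDef)
    (b : Fin n → ℝ)
    (X R D : ℕ → Matrix (Fin n) (Fin p) ℝ)
    (α β : ℕ → Matrix (Fin p) (Fin p) ℝ)
    (hR : ∀ i, R i = A * X i - Matrix.vecMulVec b 1)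
    (hD0 : D 0 = R 0)
    (hinv : ∀ i < n / p, IsUnit ((D i)ᵀ * A * D i).det)
    (hα : ∀ i < n / p, α i = -((R i)ᵀ * D i * ((D i)ᵀ * A * D i)⁻¹))
    (hX : ∀ i < n / p, X (i + 1) = X i + D i * (α i)ᵀ)
    (hβ : ∀ i < n / p, β i = -((R (i + 1))ᵀ * A * D i * ((D i)ᵀ * A * D i)⁻¹))
    (hDs : ∀ i < n / p, D (i + 1) = R (i + 1) + D i * (β i)ᵀ)
    (f : (Fin n → ℝ) → ℝ)
    (hf : ∀ y, f y = (1 / 2) * (y ⬝ᵥ A *ᵥ y) - b ⬝ᵥ y)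
    :
    Module.finrank ℝ (colSpanLt n p (n / p) D) = p * (n / p) ∧
      (∀ j : Fin p, ∀ v ∈ colSpanLt n p (n / p) D,
        f (fun r => X (n / p) r j) ≤ f ((fun r => X 0 r j) + v)) ∧
      n - p * (n / p) ≤ p - 1 := by
  have h : IsCCGIteration A b (n / p) X R D α β := ⟨hR, hD0, hinv, hα, hX, hβ, hDs⟩
  have hsymm : A.IsSymm := isHermitian_iff_isSymm.mp hA.isHermitian
  refine ⟨finrank_colSpanLt hinv fun i hi l hl hil =>
      h.transpose_direction_mul_direction hsymm hi hl hil, fun j v hv => ?_, ?_⟩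
  · rw [hf, hf]
    exact h.quadratic_col_iterate_le hA j hv
  · rw [← Nat.mod_eq_sub_mul_div]
    exact Nat.le_sub_one_of_lt (Nat.mod_lt n hp)

/-- If the cCG iteration is well defined with `rank D_k = p` (and
`D_kᵀAD_k` invertible) for all `0 ≤ k < k* = ⌊n/p⌋`, then `span[D_i]₀^{k*−1}` has
dimension `p⌊n/p⌋`, and each column `X_{k*}e_j` minimizes `f` over the affine
subspace `X₀e_j + span[D_i]₀^{k*−1}` of dimension `p⌊n/p⌋`
(hence of codimension `n − p⌊n/p⌋ ≤ p − 1`). -/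
theorem cCG_final_minimization
    (n p : ℕ) (hn : 0 < n) (hp : 0 < p) (hpn : p ≤ n)
    (A : Matrix (Fin n) (Fin n) ℝ) (hA : A.PosDef)
    (b : Fin n → ℝ)
    (X R D : ℕ → Matrix (Fin n) (Fin p) ℝ)
    (α β : ℕ → Matrix (Fin p) (Fin p) ℝ)
    (hR : ∀ i, R i = A * X i - Matrix.vecMulVec b 1)
    (hD0 : D 0 = R 0)
    (hinv : ∀ i < n / p, IsUnit ((D i)ᵀ * A * D i).det)
    (hrank : ∀ i < n / p, (D i).rank = p)
    (hα : ∀ i < n / p, α i = -((R i)ᵀ * D i * ((D i)ᵀ * A * D i)⁻¹))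
    (hX : ∀ i < n / p, X (i + 1) = X i + D i * (α i)ᵀ)
    (hβ : ∀ i < n / p, β i = -((R (i + 1))ᵀ * A * D i * ((D i)ᵀ * A * D i)⁻¹))
    (hDs : ∀ i < n / p, D (i + 1) = R (i + 1) + D i * (β i)ᵀ)
    (f : (Fin n → ℝ) → ℝ)
    (hf : ∀ y, f y = (1 / 2) * (y ⬝ᵥ A *ᵥ y) - b ⬝ᵥ y)
    :
    Module.finrank ℝ (colSpanLt n p (n / p) D) = p * (n / p) ∧
      (∀ j : Fin p, ∀ v ∈ colSpanLt n p (n / p) D,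
        f (fun r => X (n / p) r j) ≤ f ((fun r => X 0 r j) + v)) ∧
      n - p * (n / p) ≤ p - 1 :=
  cCG_final_minimization_general n p hp A hA b X R D α β hR hD0 hinv hα hX hβ hDs f hf
end
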